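/- In a nonlinear model (p_k ≠ k/m for some 0 ≤ k ≤ m) with X_0 > 0 and Y_0 > 0, if p_0 > 0 and p_m < 1, then P(0) = p_0/2 > 0 and P(1) = (p_m − 1)/2 < 0, so every point of Z_P lies in the open interval (0,1); consequently a_n converges almost surely to a limit lying in (0,1), i.e., the two types coexist in the limit. -/

import Mathlib

open MeasureTheory ProbabilityTheory Filter Set

noncomputable section

/-- The polynomial `P(z) = (1/2) ∑_{k=0}^m C(m,k) z^k (1-z)^{m-k} (p_k - k/m)`. -/
def polyP (m : ℕ) (p : ℕ → ℝ) (z : ℝ) : ℝ :=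
  (1 / 2) * ∑ k ∈ Finset.range (m + 1),
    (m.choose k : ℝ) * z ^ k * (1 - z) ^ (m - k) * (p k - (k : ℝ) / m)

/-- The zero set `Z_P = {z ∈ [0,1] : P(z) = 0}`. -/
def zeroSetP (m : ℕ) (p : ℕ → ℝ) : Set ℝ :=
  {z ∈ Set.Icc (0 : ℝ) 1 | polyP m p z = 0}

/-- The two-type preferential attachment process with `m` edges per new node and type
adoption parameters `p 0, …, p m`, defined on a probability space `(Ω, μ)` with filtration
`F`.  `A n` is the number of red nodes and `X n` the sum of the degrees of red nodes at time
`n`; the transition probabilities given `F n` are those of the model: a number `k` of red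
neighbours is drawn from the `Binomial(m, x_n)` distribution, and then the new node is red
with probability `p k` (adding `1` to the red nodes and `k + m` to the red degrees) and blue
with probability `1 - p k` (adding `k` to the red degrees). -/
structure PAProcess (Ω : Type) [MeasurableSpace Ω] where
  μ : Measure Ω
  isProb : IsProbabilityMeasure μ
  m : ℕ
  hm : 1 ≤ m
  p : ℕ → ℝ
  hp : ∀ k ≤ m, p k ∈ Set.Icc (0 : ℝ) 1
  A : ℕ → Ω → ℕ
  X : ℕ → Ω → ℕ
  F : Filtration ℕ ‹MeasurableSpace Ω›
  A0 : ℕ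
  B0 : ℕ
  X0 : ℕ
  Y0 : ℕ
  hA0 : ∀ ω, A 0 ω = A0
  hX0 : ∀ ω, X 0 ω = X0
  adaptedA : ∀ n, Measurable[F n] (A n)
  adaptedX : ∀ n, Measurable[F n] (X n)
  hXle : ∀ n ω, X n ω ≤ X0 + Y0 + 2 * m * n
  step_red : ∀ n, ∀ k ≤ m,
    μ[Set.indicator {ω | A (n + 1) ω = A n ω + 1 ∧ X (n + 1) ω = X n ω + k + m}
        (fun _ => (1 : ℝ)) | F n]
      =ᵐ[μ] fun ω => (m.choose k : ℝ) *
        ((X n ω : ℝ) / ((X0 : ℝ) + Y0 + 2 * m * n)) ^ k *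
        (1 - (X n ω : ℝ) / ((X0 : ℝ) + Y0 + 2 * m * n)) ^ (m - k) * p k
  step_blue : ∀ n, ∀ k ≤ m,
    μ[Set.indicator {ω | A (n + 1) ω = A n ω ∧ X (n + 1) ω = X n ω + k}
        (fun _ => (1 : ℝ)) | F n]
      =ᵐ[μ] fun ω => (m.choose k : ℝ) *
        ((X n ω : ℝ) / ((X0 : ℝ) + Y0 + 2 * m * n)) ^ k *
        (1 - (X n ω : ℝ) / ((X0 : ℝ) + Y0 + 2 * m * n)) ^ (m - k) * (1 - p k)

namespace PAProcess

variable {Ω : Type} [MeasurableSpace Ω] (P : PAProcess Ω)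

/-- Total degree `S_n = S_0 + 2mn`. -/
def S (n : ℕ) : ℕ := P.X0 + P.Y0 + 2 * P.m * n

/-- Normalized red degree `x_n = X_n / S_n`. -/
def x (n : ℕ) (ω : Ω) : ℝ := (P.X n ω : ℝ) / (P.S n : ℝ)

/-- Normalized red node count `a_n = A_n / (A_0 + B_0 + n)`. -/
def a (n : ℕ) (ω : Ω) : ℝ := (P.A n ω : ℝ) / ((P.A0 : ℝ) + P.B0 + n)

/-- The polynomial `P` of the process. -/
def poly : ℝ → ℝ := polyP P.m P.p

/-- The zero set `Z_P` of the process. -/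
def Zp : Set ℝ := zeroSetP P.m P.p

end PAProcess

/-!
`P(0)` and `P(1)` are read off the Bernstein form of `P`. For the limit, write
`x_{n+1} = x_n + (2m / S_{n+1}) P(x_n) + ΔM_n` and
`a_{n+1} = a_n + (x_n + 2 P(x_n) - a_n) / (A_0 + B_0 + n + 1) + ΔK_n`, where `M` and `K` are the
martingale parts of `x` and `a`. Both processes move by `O(1/n)` per step, so `M` and `K` are
bounded in `L²` and converge almost surely. Along such a path `x` is a stochastic approximation of
`ẋ = P(x)`: as `P` is a nonzero polynomial, `x` cannot oscillate (it would have to cross an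
interval free of zeros of `P` against the drift infinitely often), so it converges, and since
`∑ 1/n = ∞` its limit `z` is a zero of `P`. Finally `a` is a running average of the
probabilities `x_n + 2 P(x_n) → z` that the new node is red, so `a → z ∈ Z_P ⊆ (0, 1)`.
-/

open Topology

section Bernstein

lemma eval_bernsteinPolynomial (m k : ℕ) (z : ℝ) :
    (bernsteinPolynomial ℝ m k).eval z = (m.choose k : ℝ) * z ^ k * (1 - z) ^ (m - k) := by
  simp [bernsteinPolynomial]

lemma sum_bernstein_eq_one (m : ℕ) (z : ℝ) :
    ∑ k ∈ Finset.range (m + 1), (m.choose k : ℝ) * z ^ k * (1 - z) ^ (m - k) = 1 := by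
  simpa [Polynomial.eval_finsetSum, eval_bernsteinPolynomial] using
    congrArg (Polynomial.eval z) (bernsteinPolynomial.sum ℝ m)

lemma sum_natCast_mul_bernstein (m : ℕ) (z : ℝ) :
    ∑ k ∈ Finset.range (m + 1), (k : ℝ) * ((m.choose k : ℝ) * z ^ k * (1 - z) ^ (m - k))
      = m * z := by
  simpa [Polynomial.eval_finsetSum, eval_bernsteinPolynomial, nsmul_eq_mul] using
    congrArg (Polynomial.eval z) (bernsteinPolynomial.sum_smul ℝ m)

lemma sum_bernstein_mul_eq_add_two_mul_polyP {m : ℕ} (hm : 1 ≤ m) (p : ℕ → ℝ) (z : ℝ) :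
    ∑ k ∈ Finset.range (m + 1), (m.choose k : ℝ) * z ^ k * (1 - z) ^ (m - k) * p k
      = z + 2 * polyP m p z := by
  have hm' : (m : ℝ) ≠ 0 := by positivity
  have hsplit : ∑ k ∈ Finset.range (m + 1),
      (m.choose k : ℝ) * z ^ k * (1 - z) ^ (m - k) * (p k - (k : ℝ) / m)
      = ∑ k ∈ Finset.range (m + 1), (m.choose k : ℝ) * z ^ k * (1 - z) ^ (m - k) * p k
        - (∑ k ∈ Finset.range (m + 1),
            (k : ℝ) * ((m.choose k : ℝ) * z ^ k * (1 - z) ^ (m - k))) / m := by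
    rw [Finset.sum_div, ← Finset.sum_sub_distrib]
    exact Finset.sum_congr rfl fun k _ => by ring
  rw [polyP, hsplit, sum_natCast_mul_bernstein]
  field_simp
  ring

lemma polyP_zero {m : ℕ} (hm : 1 ≤ m) (p : ℕ → ℝ) : polyP m p 0 = p 0 / 2 := by
  have h := sum_bernstein_mul_eq_add_two_mul_polyP hm p 0
  rw [Finset.sum_eq_single 0 (fun k _ hk => by simp [hk]) (by simp)] at h
  simp at h
  linarith

lemma polyP_one {m : ℕ} (hm : 1 ≤ m) (p : ℕ → ℝ) : polyP m p 1 = (p m - 1) / 2 := by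
  have h := sum_bernstein_mul_eq_add_two_mul_polyP hm p 1
  rw [Finset.sum_eq_single m (fun k hk hkm => by
    simp [Nat.sub_ne_zero_of_lt (lt_of_le_of_ne (Finset.mem_range_succ_iff.mp hk) hkm)])
    (by simp)] at h
  simp at h
  linarith

lemma exists_polynomial_eval_eq_polyP (m : ℕ) (p : ℕ → ℝ) :
    ∃ q : Polynomial ℝ, ∀ z, q.eval z = polyP m p z :=
  ⟨Polynomial.C (1 / 2) * ∑ k ∈ Finset.range (m + 1),
      Polynomial.C (p k - (k : ℝ) / m) * bernsteinPolynomial ℝ m k,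
    fun z => by
      simp [Polynomial.eval_finsetSum, eval_bernsteinPolynomial, polyP, mul_comm]⟩

lemma continuous_polyP (m : ℕ) (p : ℕ → ℝ) : Continuous (polyP m p) := by
  obtain ⟨q, hq⟩ := exists_polynomial_eval_eq_polyP m p
  simpa [← funext hq] using q.continuous

lemma finite_setOf_polyP_eq_zero {m : ℕ} {p : ℕ → ℝ} (h : ∃ z, polyP m p z ≠ 0) :
    {z | polyP m p z = 0}.Finite := by
  obtain ⟨q, hq⟩ := exists_polynomial_eval_eq_polyP m p
  obtain ⟨z, hz⟩ := h
  have hq0 : q ≠ 0 := by rintro rfl; exact hz (by simp [← hq])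
  simpa [Polynomial.IsRoot, hq] using Polynomial.finite_setOfPred_isRoot hq0

lemma zeroSetP_subset_Ioo {m : ℕ} {p : ℕ → ℝ} (h0 : polyP m p 0 ≠ 0) (h1 : polyP m p 1 ≠ 0) :
    zeroSetP m p ⊆ Set.Ioo 0 1 := by
  rintro z ⟨⟨hz0, hz1⟩, hz⟩
  refine ⟨lt_of_le_of_ne hz0 ?_, lt_of_le_of_ne hz1 ?_⟩ <;> rintro rfl <;> contradiction

end Bernstein

lemma abs_add_div_add_sub_div_le {X S j d : ℝ} (hX : 0 ≤ X) (hXS : X ≤ S) (hj : 0 ≤ j)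
    (hjd : j ≤ d) (hd : 0 < d) : |(X + j) / (S + d) - X / S| ≤ d / (S + d) := by
  rcases eq_or_lt_of_le (hX.trans hXS) with rfl | hS
  · obtain rfl : X = 0 := le_antisymm hXS hX
    rw [zero_add, zero_add, div_zero, sub_zero, abs_of_nonneg (div_nonneg hj hd.le)]
    exact div_le_div_of_nonneg_right hjd hd.le
  have h : |(X + j) * S - (S + d) * X| ≤ d * S := abs_le.mpr ⟨by nlinarith, by nlinarith⟩
  rw [div_sub_div _ _ (by linarith) hS.ne', abs_div, abs_of_pos (by positivity : 0 < (S + d) * S),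
    div_le_div_iff₀ (by positivity) (by positivity)]
  nlinarith [mul_le_mul_of_nonneg_right h (by linarith : 0 ≤ S + d)]

lemma summable_one_div_nat_succ_sq : Summable fun n : ℕ => (1 / ((n : ℝ) + 1)) ^ 2 := by
  simpa [div_pow] using (summable_nat_add_iff 1).mpr (Real.summable_one_div_nat_pow.mpr one_lt_two)

lemma tendsto_sum_div_add_mul_succ_atTop {s d : ℝ} (hs : 0 ≤ s) (hd : 0 < d) :
    Tendsto (fun N => ∑ n ∈ Finset.range N, d / (s + d * (n + 1))) atTop atTop := by
  refine tendsto_atTop_mono (fun N => ?_)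
    ((Real.tendsto_sum_range_one_div_nat_succ_atTop).const_mul_atTop
      (div_pos hd (by linarith : 0 < s + d)))
  rw [Finset.mul_sum]
  refine Finset.sum_le_sum fun n _ => ?_
  rw [div_mul_div_comm, mul_one]
  exact div_le_div_of_nonneg_left hd.le (by positivity) (by nlinarith [n.cast_nonneg (α := ℝ)])

section StochasticApproximation

variable {φ : ℝ → ℝ} {f g c : ℕ → ℝ}

lemma eq_add_sum_Ico_of_rec (hrec : ∀ n, f (n + 1) = f n + (g (n + 1) - g n) + c n * φ (f n))
    {a b : ℕ} (hab : a ≤ b) :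
    f b = f a + (g b - g a) + ∑ i ∈ Finset.Ico a b, c i * φ (f i) := by
  induction b, hab using Nat.le_induction with
  | base => simp
  | succ n hn ih => rw [Finset.sum_Ico_succ_top hn, hrec n, ih]; ring

lemma rec_neg (hrec : ∀ n, f (n + 1) = f n + (g (n + 1) - g n) + c n * φ (f n)) (n : ℕ) :
    (-f) (n + 1) = (-f) n + ((-g) (n + 1) - (-g) n) + c n * (fun t => -φ (-t)) ((-f) n) := by
  simp only [Pi.neg_apply, neg_neg]
  linarith [hrec n]

lemma tendsto_sum_Ico_atTop (hc : Tendsto (fun n => ∑ i ∈ Finset.range n, c i) atTop atTop)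
    (N : ℕ) : Tendsto (fun n => ∑ i ∈ Finset.Ico N n, c i) atTop atTop := by
  refine (tendsto_atTop_add_const_right _ (-∑ i ∈ Finset.range N, c i) hc).congr' ?_
  filter_upwards [eventually_ge_atTop N] with n hn
  rw [Finset.sum_Ico_eq_sub _ hn, sub_eq_add_neg]

/-- Once `f` has been above `v`, it can only come back below `u` against the drift, and the noise
`g` is eventually too small for that: `f - g` does not decrease while `f` stays in `(u, v)`. -/
lemma eventually_lt_of_rec_of_nonneg (hc : ∀ n, 0 ≤ c n)
    (hrec : ∀ n, f (n + 1) = f n + (g (n + 1) - g n) + c n * φ (f n))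
    (hstep : Tendsto (fun n => f (n + 1) - f n) atTop (𝓝 0)) (hg : CauchySeq g)
    {u v : ℝ} (huv : u < v) (hφ : ∀ t ∈ Set.Ioo u v, 0 ≤ φ t)
    (hhigh : ∃ᶠ n in atTop, v < f n) : ∀ᶠ n in atTop, u < f n := by
  set ε := (v - u) / 4 with hε
  have hε0 : 0 < ε := by linarith
  obtain ⟨N₁, hN₁⟩ : ∃ N, ∀ n ≥ N, |f (n + 1) - f n| < ε := by
    simpa [Real.dist_eq] using Metric.tendsto_atTop.mp hstep ε hε0
  obtain ⟨N₂, hN₂⟩ := Metric.cauchySeq_iff.mp hg ε hε0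
  obtain ⟨n₀, hv, hn₀⟩ := (hhigh.and_eventually (eventually_ge_atTop (max N₁ N₂))).exists
  have hfar : ∀ n s, n₀ ≤ s → n₀ ≤ n → v - ε < f s → f s - g s ≤ f n - g n → u < f n := by
    intro n s hs hn hfs hfg
    have := abs_lt.mp (Real.dist_eq _ _ ▸ hN₂ n (by omega) s (by omega))
    linarith
  have key : ∀ n ≥ n₀, v ≤ f n ∨
      ∃ s, n₀ ≤ s ∧ s ≤ n ∧ v - ε < f s ∧ f s - g s ≤ f n - g n := by
    intro n hn
    induction n, hn using Nat.le_induction with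
    | base => exact Or.inl hv.le
    | succ n hn ih =>
      right
      by_cases hvn : v ≤ f n
      · refine ⟨n + 1, by omega, le_rfl, ?_, le_rfl⟩
        linarith [(abs_lt.mp (hN₁ n (by omega))).1]
      · obtain ⟨s, hs, hsn, hfs, hfg⟩ := ih.resolve_left hvn
        have hdrift := mul_nonneg (hc n) (hφ (f n) ⟨hfar n s hs hn hfs hfg, not_le.mp hvn⟩)
        exact ⟨s, hs, by omega, hfs, by rw [hrec n]; linarith⟩
  filter_upwards [eventually_ge_atTop n₀] with n hn
  rcases key n hn with h | ⟨s, hs, -, hfs, hfg⟩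
  · linarith
  · exact hfar n s hs hn hfs hfg

lemma eventually_lt_of_rec_of_nonpos (hc : ∀ n, 0 ≤ c n)
    (hrec : ∀ n, f (n + 1) = f n + (g (n + 1) - g n) + c n * φ (f n))
    (hstep : Tendsto (fun n => f (n + 1) - f n) atTop (𝓝 0)) (hg : CauchySeq g)
    {u v : ℝ} (huv : u < v) (hφ : ∀ t ∈ Set.Ioo u v, φ t ≤ 0)
    (hlow : ∃ᶠ n in atTop, f n < u) : ∀ᶠ n in atTop, f n < v := by
  have hneg := eventually_lt_of_rec_of_nonneg (φ := fun t => -φ (-t)) (f := -f) (g := -g) hc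
    (rec_neg hrec) (by simpa [neg_add_eq_sub] using hstep.neg) hg.neg (neg_lt_neg huv)
    (fun t ht => by simpa using hφ (-t) ⟨lt_neg.mp ht.2, neg_lt.mp ht.1⟩)
    (hlow.mono fun n hn => neg_lt_neg hn)
  exact hneg.mono fun n hn => by simpa using hn

lemma exists_tendsto_of_rec (hφ : Continuous φ) (hfin : {t | φ t = 0}.Finite)
    (hc : ∀ n, 0 ≤ c n) (hrec : ∀ n, f (n + 1) = f n + (g (n + 1) - g n) + c n * φ (f n))
    (hstep : Tendsto (fun n => f (n + 1) - f n) atTop (𝓝 0)) (hg : CauchySeq g)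
    {α β : ℝ} (hbdd : ∀ n, f n ∈ Set.Icc α β) : ∃ z, Tendsto f atTop (𝓝 z) := by
  have hBa : IsBoundedUnder (· ≤ ·) atTop f := isBoundedUnder_of ⟨β, fun n => (hbdd n).2⟩
  have hBb : IsBoundedUnder (· ≥ ·) atTop f := isBoundedUnder_of ⟨α, fun n => (hbdd n).1⟩
  refine ⟨liminf f atTop, tendsto_of_liminf_eq_limsup rfl ?_ hBa hBb⟩
  by_contra hne
  have hlt := lt_of_le_of_ne (liminf_le_limsup hBa hBb) (Ne.symm hne)
  obtain ⟨z₀, hz₀, hφz₀⟩ := ((Set.Ioo_infinite hlt).sdiff hfin).nonempty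
  have hsign : ∀ᶠ t in 𝓝 z₀, 0 < φ z₀ * φ t ∧ t ∈ Set.Ioo (liminf f atTop) (limsup f atTop) :=
    (((continuous_const.mul hφ).tendsto z₀).eventually
      (lt_mem_nhds (mul_self_pos.mpr hφz₀))).and (isOpen_Ioo.mem_nhds hz₀)
  obtain ⟨u', v', hz', hsub⟩ := mem_nhds_iff_exists_Ioo_subset.mp hsign
  obtain ⟨u, hu', hu⟩ := exists_between hz'.1
  obtain ⟨v, hv, hv'⟩ := exists_between hz'.2
  have hIoo : ∀ t ∈ Set.Ioo u v, 0 < φ z₀ * φ t := fun t ht =>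
    (hsub ⟨hu'.trans ht.1, ht.2.trans hv'⟩).1
  have hlow : ∃ᶠ n in atTop, f n < u := frequently_lt_of_liminf_lt hBa.isCoboundedUnder_ge
    (hsub ⟨hu', hu.trans hz'.2⟩).2.1
  have hhigh : ∃ᶠ n in atTop, v < f n := frequently_lt_of_lt_limsup hBb.isCoboundedUnder_le
    (hsub ⟨hz'.1.trans hv, hv'⟩).2.2
  rcases lt_or_gt_of_ne hφz₀ with hneg | hpos
  · have hup := eventually_lt_of_rec_of_nonpos hc hrec hstep hg (hu.trans hv)
      (fun t ht => (neg_of_mul_pos_right (hIoo t ht) hneg.le).le) hlow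
    obtain ⟨n, h₁, h₂⟩ := (hhigh.and_eventually hup).exists
    linarith
  · have hdown := eventually_lt_of_rec_of_nonneg hc hrec hstep hg (hu.trans hv)
      (fun t ht => (pos_of_mul_pos_right (hIoo t ht) hpos.le).le) hhigh
    obtain ⟨n, h₁, h₂⟩ := (hlow.and_eventually hdown).exists
    linarith

lemma tendsto_sub_atTop_of_rec (hc : ∀ n, 0 ≤ c n)
    (hcsum : Tendsto (fun n => ∑ i ∈ Finset.range n, c i) atTop atTop)
    (hrec : ∀ n, f (n + 1) = f n + (g (n + 1) - g n) + c n * φ (f n))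
    {δ : ℝ} (hδ : 0 < δ) (hφf : ∀ᶠ n in atTop, δ ≤ φ (f n)) :
    Tendsto (fun n => f n - g n) atTop atTop := by
  obtain ⟨N, hN⟩ := eventually_atTop.mp hφf
  refine tendsto_atTop_mono' _ ?_ (tendsto_atTop_add_const_left _ (f N - g N)
    ((tendsto_sum_Ico_atTop hcsum N).const_mul_atTop hδ))
  filter_upwards [eventually_ge_atTop N] with n hn
  have hsum : δ * ∑ i ∈ Finset.Ico N n, c i ≤ ∑ i ∈ Finset.Ico N n, c i * φ (f i) := by
    rw [Finset.mul_sum]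
    exact Finset.sum_le_sum fun i hi => by
      rw [mul_comm]; exact mul_le_mul_of_nonneg_left (hN i (Finset.mem_Ico.mp hi).1) (hc i)
  rw [eq_add_sum_Ico_of_rec hrec hn]
  linarith

lemma eq_zero_of_tendsto_of_rec (hφ : Continuous φ) (hc : ∀ n, 0 ≤ c n)
    (hcsum : Tendsto (fun n => ∑ i ∈ Finset.range n, c i) atTop atTop)
    (hrec : ∀ n, f (n + 1) = f n + (g (n + 1) - g n) + c n * φ (f n))
    {z l : ℝ} (hf : Tendsto f atTop (𝓝 z)) (hg : Tendsto g atTop (𝓝 l)) : φ z = 0 := by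
  have hφf := (hφ.tendsto z).comp hf
  by_contra hz
  rcases lt_or_gt_of_ne hz with hneg | hpos
  · have hev : ∀ᶠ n in atTop, -φ z / 2 ≤ (fun t => -φ (-t)) ((-f) n) :=
      (hφf.eventually (eventually_le_nhds (by linarith : φ z < φ z / 2))).mono fun n hn => by
        simp only [Pi.neg_apply, neg_neg, Function.comp_apply] at hn ⊢
        linarith
    refine not_tendsto_atTop_of_tendsto_nhds (hf.neg.sub hg.neg) ?_
    exact tendsto_sub_atTop_of_rec (φ := fun t => -φ (-t)) (f := -f) (g := -g) hc hcsum
      (rec_neg hrec) (by linarith : 0 < -φ z / 2) hev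
  · have hev : ∀ᶠ n in atTop, φ z / 2 ≤ φ (f n) :=
      hφf.eventually (eventually_ge_nhds (by linarith : φ z / 2 < φ z))
    exact not_tendsto_atTop_of_tendsto_nhds (hf.sub hg)
      (tendsto_sub_atTop_of_rec hc hcsum hrec (by linarith) hev)

lemma abs_le_of_rec_linear {h ρ : ℕ → ℝ} (hc0 : ∀ n, 0 ≤ c n) (hc1 : ∀ n, c n ≤ 1)
    (hrec : ∀ n, h (n + 1) = (1 - c n) * h n + c n * ρ n) {N : ℕ} {ε : ℝ}
    (hρ : ∀ n ≥ N, |ρ n| ≤ ε) :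
    ∀ n ≥ N, |h n| ≤ ε + |h N| * Real.exp (-∑ i ∈ Finset.Ico N n, c i) := by
  intro n hn
  induction n, hn using Nat.le_induction with
  | base => simpa using (abs_nonneg _).trans (hρ N le_rfl)
  | succ n hn ih =>
    have hexp : 1 - c n ≤ Real.exp (-c n) := by linarith [Real.add_one_le_exp (-c n)]
    have hE : Real.exp (-∑ i ∈ Finset.Ico N (n + 1), c i)
        = Real.exp (-∑ i ∈ Finset.Ico N n, c i) * Real.exp (-c n) := by
      rw [Finset.sum_Ico_succ_top hn, neg_add, Real.exp_add]
    have hstep : |h (n + 1)| ≤ (1 - c n) * |h n| + c n * |ρ n| := by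
      rw [hrec n]
      refine (abs_add_le _ _).trans_eq ?_
      rw [abs_mul, abs_mul, abs_of_nonneg (sub_nonneg.mpr (hc1 n)), abs_of_nonneg (hc0 n)]
    have hρn := hρ n hn
    have hpos : 0 ≤ |h N| * Real.exp (-∑ i ∈ Finset.Ico N n, c i) := by positivity
    rw [hE]
    nlinarith [hc0 n, hc1 n]

lemma tendsto_zero_of_rec_linear {h ρ : ℕ → ℝ} (hc0 : ∀ n, 0 ≤ c n) (hc1 : ∀ n, c n ≤ 1)
    (hcsum : Tendsto (fun n => ∑ i ∈ Finset.range n, c i) atTop atTop)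
    (hrec : ∀ n, h (n + 1) = (1 - c n) * h n + c n * ρ n) (hρ : Tendsto ρ atTop (𝓝 0)) :
    Tendsto h atTop (𝓝 0) := by
  refine Metric.tendsto_atTop.mpr fun ε hε => ?_
  obtain ⟨N, hN⟩ := Metric.tendsto_atTop.mp hρ (ε / 2) (half_pos hε)
  have hbound := abs_le_of_rec_linear hc0 hc1 hrec (N := N) (ε := ε / 2)
    fun n hn => by simpa using (hN n hn).le
  have hdecay : Tendsto (fun n => |h N| * Real.exp (-∑ i ∈ Finset.Ico N n, c i)) atTop (𝓝 0) := by
    simpa using (Real.tendsto_exp_neg_atTop_nhds_zero.comp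
      (tendsto_sum_Ico_atTop hcsum N)).const_mul |h N|
  obtain ⟨M, hM⟩ := eventually_atTop.mp
    ((hdecay.eventually (gt_mem_nhds (half_pos hε))).and (eventually_ge_atTop N))
  refine ⟨M, fun n hn => ?_⟩
  rw [Real.dist_eq, sub_zero]
  linarith [hbound n (hM n hn).2, (hM n hn).1]

lemma tendsto_of_rec_linear {q : ℕ → ℝ} {z l : ℝ} (hc0 : ∀ n, 0 ≤ c n) (hc1 : ∀ n, c n ≤ 1)
    (hcsum : Tendsto (fun n => ∑ i ∈ Finset.range n, c i) atTop atTop)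
    (hq : Tendsto q atTop (𝓝 z)) (hg : Tendsto g atTop (𝓝 l))
    (hrec : ∀ n, f (n + 1) = f n + (g (n + 1) - g n) + c n * (q n - f n)) :
    Tendsto f atTop (𝓝 z) := by
  have hh := tendsto_zero_of_rec_linear (h := fun n => f n - z - (g n - l))
    (ρ := fun n => q n - z - (g n - l)) hc0 hc1 hcsum (fun n => by rw [hrec n]; ring)
    (by simpa using (hq.sub_const z).sub (hg.sub_const l))
  refine ((hh.add_const z).add (hg.sub_const l)).congr (fun n => by ring) |>.trans ?_
  simp

end StochasticApproximation

section Martingale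

variable {Ω : Type*} {m0 : MeasurableSpace Ω} {μ : Measure Ω} {ℱ : Filtration ℕ m0}
  {f : ℕ → Ω → ℝ} {b : ℕ → ℝ} {K : ℝ}

lemma ae_abs_le_add_sum (h0 : ∀ᵐ ω ∂μ, |f 0 ω| ≤ K)
    (hb : ∀ n, ∀ᵐ ω ∂μ, |f (n + 1) ω - f n ω| ≤ b n) (n : ℕ) :
    ∀ᵐ ω ∂μ, |f n ω| ≤ K + ∑ i ∈ Finset.range n, b i := by
  induction n with
  | zero => simpa using h0
  | succ n ih =>
    filter_upwards [ih, hb n] with ω h₁ h₂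
    rw [Finset.sum_range_succ]
    linarith [abs_sub_abs_le_abs_sub (f (n + 1) ω) (f n ω)]

lemma martingalePart_add_one_sub_apply (n : ℕ) (ω : Ω) :
    martingalePart f ℱ μ (n + 1) ω - martingalePart f ℱ μ n ω
      = f (n + 1) ω - f n ω - (μ[f (n + 1) - f n | ℱ n]) ω := by
  simp only [martingalePart, predictablePart_add_one, Pi.sub_apply, Pi.add_apply]
  abel

lemma condExp_indicator_eq_mul_of_bound {m : MeasurableSpace Ω} [IsFiniteMeasure μ]
    (hm : m ≤ m0) {s : Set Ω} (hs : MeasurableSet[m0] s) {u : Ω → ℝ}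
    (hu : StronglyMeasurable[m] u) {C : ℝ} (hC : ∀ᵐ ω ∂μ, |u ω| ≤ C) :
    μ[s.indicator u | m] =ᵐ[μ] u * μ[s.indicator (fun _ => 1) | m] := by
  have : s.indicator u = u * s.indicator (fun _ => 1) := by
    ext ω; by_cases hω : ω ∈ s <;> simp [hω]
  rw [this]
  exact condExp_stronglyMeasurable_mul_of_bound hm hu ((integrable_const 1).indicator hs) C
    (by simpa only [Real.norm_eq_abs] using hC)

lemma integrable_of_ae_mem_Icc [IsFiniteMeasure μ] {g : Ω → ℝ} (hg : AEStronglyMeasurable g μ)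
    (h : ∀ᵐ ω ∂μ, g ω ∈ Set.Icc (0 : ℝ) 1) : Integrable g μ :=
  Integrable.of_bound hg 1 (h.mono fun ω hω => by
    rw [Real.norm_eq_abs, abs_of_nonneg hω.1]; exact hω.2)

variable [IsProbabilityMeasure μ]

lemma integrable_sq_of_ae_abs_le {g : Ω → ℝ} {C : ℝ} (hg : AEStronglyMeasurable g μ)
    (hC : ∀ᵐ ω ∂μ, |g ω| ≤ C) : Integrable (fun ω => g ω ^ 2) μ :=
  Integrable.of_bound (hg.pow 2) (C ^ 2) (hC.mono fun ω h => by
    rw [Real.norm_eq_abs, abs_pow]; exact pow_le_pow_left₀ (abs_nonneg _) h 2)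

lemma integral_sq_le_of_ae_abs_le {g : Ω → ℝ} {C : ℝ} (hC : ∀ᵐ ω ∂μ, |g ω| ≤ C) :
    ∫ ω, g ω ^ 2 ∂μ ≤ C ^ 2 := by
  simpa using integral_mono_of_nonneg (f := fun ω => g ω ^ 2) (g := fun _ => C ^ 2)
    (.of_forall fun ω => sq_nonneg (g ω)) (integrable_const _) (hC.mono fun ω h => by
      simp only [← sq_abs (g ω)]; exact pow_le_pow_left₀ (abs_nonneg _) h 2)

lemma MeasureTheory.Martingale.integral_mul_sub_eq_zero (hf : Martingale f ℱ μ) {n : ℕ} {C : ℝ}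
    (hC : ∀ᵐ ω ∂μ, |f n ω| ≤ C) : ∫ ω, f n ω * (f (n + 1) ω - f n ω) ∂μ = 0 := by
  have hint := (hf.integrable (n + 1)).sub (hf.integrable n)
  have hcond : μ[f (n + 1) - f n | ℱ n] =ᵐ[μ] 0 := by
    filter_upwards [condExp_sub (hf.integrable (n + 1)) (hf.integrable n) (ℱ n),
      hf.condExp_ae_eq n.le_succ] with ω h h₁
    rw [h, Pi.sub_apply, h₁, condExp_of_stronglyMeasurable (ℱ.le n) (hf.stronglyAdapted n)
      (hf.integrable n), sub_self, Pi.zero_apply]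
  calc ∫ ω, f n ω * (f (n + 1) ω - f n ω) ∂μ
      = ∫ ω, (μ[f n * (f (n + 1) - f n) | ℱ n]) ω ∂μ := (integral_condExp (ℱ.le n)).symm
    _ = ∫ ω, f n ω * (μ[f (n + 1) - f n | ℱ n]) ω ∂μ :=
        integral_congr_ae (condExp_stronglyMeasurable_mul_of_bound (ℱ.le n)
          (hf.stronglyAdapted n) hint C (by simpa only [Real.norm_eq_abs] using hC))
    _ = 0 := integral_eq_zero_of_ae (hcond.mono fun ω hω => by simp [hω])

lemma MeasureTheory.Martingale.integral_sq_le (hf : Martingale f ℱ μ) (h0 : ∀ᵐ ω ∂μ, |f 0 ω| ≤ K)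
    (hb : ∀ n, ∀ᵐ ω ∂μ, |f (n + 1) ω - f n ω| ≤ b n) (n : ℕ) :
    ∫ ω, f n ω ^ 2 ∂μ ≤ K ^ 2 + ∑ i ∈ Finset.range n, b i ^ 2 := by
  have hmeas := fun n => (hf.integrable n).aestronglyMeasurable
  induction n with
  | zero => simpa using integral_sq_le_of_ae_abs_le h0
  | succ n ih =>
    have hbd := ae_abs_le_add_sum h0 hb n
    have hint₀ := integrable_sq_of_ae_abs_le (hmeas n) hbd
    have hint₁ : Integrable (fun ω => 2 * (f n ω * (f (n + 1) ω - f n ω))) μ :=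
      (((hf.integrable (n + 1)).sub (hf.integrable n)).bdd_mul (hmeas n)
        (by simpa only [Real.norm_eq_abs] using hbd)).const_mul 2
    have hint₂ : Integrable (fun ω => (f (n + 1) ω - f n ω) ^ 2) μ :=
      integrable_sq_of_ae_abs_le ((hmeas (n + 1)).sub (hmeas n)) (hb n)
    have hexpand : (fun ω => f (n + 1) ω ^ 2) = fun ω => f n ω ^ 2
        + 2 * (f n ω * (f (n + 1) ω - f n ω)) + (f (n + 1) ω - f n ω) ^ 2 := by
      ext ω; ring
    have hint₀₁ : Integrable (fun ω => f n ω ^ 2 + 2 * (f n ω * (f (n + 1) ω - f n ω))) μ :=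
      hint₀.add hint₁
    rw [hexpand, integral_add hint₀₁ hint₂, integral_add hint₀ hint₁, integral_const_mul,
      hf.integral_mul_sub_eq_zero hbd, Finset.sum_range_succ]
    linarith [integral_sq_le_of_ae_abs_le (hb n)]

/-- The increments are orthogonal, so the martingale is bounded in `L²`, hence in `L¹`. -/
theorem MeasureTheory.Martingale.ae_exists_tendsto_of_summable_sq (hf : Martingale f ℱ μ)
    (h0 : ∀ᵐ ω ∂μ, |f 0 ω| ≤ K) (hb : ∀ n, ∀ᵐ ω ∂μ, |f (n + 1) ω - f n ω| ≤ b n)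
    (hsum : Summable fun n => b n ^ 2) :
    ∀ᵐ ω ∂μ, ∃ l, Tendsto (fun n => f n ω) atTop (𝓝 l) := by
  refine hf.submartingale.exists_ae_tendsto_of_bdd
    (R := ((K ^ 2 + ∑' n, b n ^ 2 + 1) / 2).toNNReal) fun n => ?_
  have hsq := integrable_sq_of_ae_abs_le (hf.integrable n).aestronglyMeasurable
    (ae_abs_le_add_sum h0 hb n)
  have habs : ∫ ω, |f n ω| ∂μ ≤ ∫ ω, (f n ω ^ 2 + 1) / 2 ∂μ :=
    integral_mono (hf.integrable n).abs ((hsq.add (integrable_const 1)).div_const 2)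
      fun ω => by nlinarith [sq_nonneg (|f n ω| - 1), sq_abs (f n ω)]
  rw [integral_div, integral_add hsq (integrable_const 1), integral_const, probReal_univ,
    smul_eq_mul, mul_one] at habs
  have htail := hsum.sum_le_tsum (Finset.range n) (fun i _ => sq_nonneg (b i))
  rw [eLpNorm_one_eq_lintegral_enorm, ← ofReal_integral_norm_eq_lintegral_enorm (hf.integrable n)]
  refine ENNReal.ofReal_le_ofReal ?_
  simp only [Real.norm_eq_abs]
  linarith [hf.integral_sq_le h0 hb n]

lemma ae_exists_tendsto_martingalePart
    (hadapt : StronglyAdapted ℱ f) (hint : ∀ n, Integrable (f n) μ)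
    (h0 : ∀ᵐ ω ∂μ, |f 0 ω| ≤ K) (hb : ∀ n, ∀ᵐ ω ∂μ, |f (n + 1) ω - f n ω| ≤ b n)
    (hsum : Summable fun n => b n ^ 2) :
    ∀ᵐ ω ∂μ, ∃ l, Tendsto (fun n => martingalePart f ℱ μ n ω) atTop (𝓝 l) := by
  refine (martingale_martingalePart hadapt hint).ae_exists_tendsto_of_summable_sq
    (b := fun n => 2 * |b n|) (by simpa using h0) (fun n => ?_)
    (by simpa [mul_pow] using hsum.mul_left (2 ^ 2))
  have hb' : ∀ᵐ ω ∂μ, |(f (n + 1) - f n) ω| ≤ |b n| :=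
    (hb n).mono fun ω h => h.trans (le_abs_self _)
  filter_upwards [hb', ae_bdd_abs_condExp_of_ae_bdd_abs (m := ℱ n) hb'] with ω h₁ h₂
  rw [martingalePart_add_one_sub_apply]
  rw [Pi.sub_apply] at h₁
  linarith [abs_sub (f (n + 1) ω - f n ω) ((μ[f (n + 1) - f n | ℱ n]) ω)]

end Martingale

namespace PAProcess

attribute [instance] PAProcess.isProb

variable {Ω : Type} [MeasurableSpace Ω] (P : PAProcess Ω)

/-- `k` is the number `u_{n+1}` of red neighbours of the new node. -/
def redStep (n k : ℕ) : Set Ω :=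
  {ω | P.A (n + 1) ω = P.A n ω + 1 ∧ P.X (n + 1) ω = P.X n ω + k + P.m}

def blueStep (n k : ℕ) : Set Ω :=
  {ω | P.A (n + 1) ω = P.A n ω ∧ P.X (n + 1) ω = P.X n ω + k}

lemma measurable_A (n : ℕ) : Measurable (P.A n) := (P.adaptedA n).mono (P.F.le n) le_rfl

lemma measurable_X (n : ℕ) : Measurable (P.X n) := (P.adaptedX n).mono (P.F.le n) le_rfl

lemma measurableSet_redStep (n k : ℕ) : MeasurableSet (P.redStep n k) :=
  (measurableSet_eq_fun (P.measurable_A (n + 1)) ((P.measurable_A n).add_const 1)).inter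
    (measurableSet_eq_fun (P.measurable_X (n + 1))
      (((P.measurable_X n).add_const k).add_const P.m))

lemma measurableSet_blueStep (n k : ℕ) : MeasurableSet (P.blueStep n k) :=
  (measurableSet_eq_fun (P.measurable_A (n + 1)) (P.measurable_A n)).inter
    (measurableSet_eq_fun (P.measurable_X (n + 1)) ((P.measurable_X n).add_const k))

lemma cast_S (n : ℕ) : (P.S n : ℝ) = P.X0 + P.Y0 + 2 * P.m * n := by
  simp [S]

lemma cast_S_succ (n : ℕ) : (P.S (n + 1) : ℝ) = P.S n + 2 * P.m := by
  rw [cast_S, cast_S]; push_cast; ring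

lemma x_mem_Icc (n : ℕ) (ω : Ω) : P.x n ω ∈ Set.Icc (0 : ℝ) 1 :=
  ⟨by unfold x; positivity, div_le_one_of_le₀ (by exact_mod_cast P.hXle n ω) (Nat.cast_nonneg _)⟩

-- Also when `S n = 0`, where `x n` is the junk value `0`: then `X n = 0` too.
lemma S_mul_x (n : ℕ) (ω : Ω) : (P.S n : ℝ) * P.x n ω = P.X n ω :=
  mul_div_cancel_of_imp' fun h =>
    le_antisymm (h ▸ (by exact_mod_cast P.hXle n ω : (P.X n ω : ℝ) ≤ P.S n)) (Nat.cast_nonneg _)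

lemma condExp_indicator_redStep {n k : ℕ} (hk : k ≤ P.m) :
    P.μ[(P.redStep n k).indicator (fun _ => (1 : ℝ)) | P.F n] =ᵐ[P.μ]
      fun ω => (P.m.choose k : ℝ) * P.x n ω ^ k * (1 - P.x n ω) ^ (P.m - k) * P.p k := by
  simp_rw [x, cast_S]
  exact P.step_red n k hk

lemma condExp_indicator_blueStep {n k : ℕ} (hk : k ≤ P.m) :
    P.μ[(P.blueStep n k).indicator (fun _ => (1 : ℝ)) | P.F n] =ᵐ[P.μ]
      fun ω => (P.m.choose k : ℝ) * P.x n ω ^ k * (1 - P.x n ω) ^ (P.m - k) * (1 - P.p k) := by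
  simp_rw [x, cast_S]
  exact P.step_blue n k hk

lemma sum_indicator_of_mem_redStep {n k₀ : ℕ} (hk₀ : k₀ ≤ P.m) {ω : Ω}
    (hω : ω ∈ P.redStep n k₀) (u v : ℕ → Ω → ℝ) :
    ∑ k ∈ Finset.range (P.m + 1),
      ((P.redStep n k).indicator (u k) ω + (P.blueStep n k).indicator (v k) ω) = u k₀ ω := by
  have hblue : ∀ k, ω ∉ P.blueStep n k := fun k h => by have := hω.1; have := h.1; omega
  rw [Finset.sum_eq_single_of_mem k₀ (Finset.mem_range_succ_iff.mpr hk₀)]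
  · simp [hω, hblue]
  · intro k _ hk
    have hred : ω ∉ P.redStep n k := fun h => hk (by have := hω.2; have := h.2; omega)
    simp [hred, hblue]

lemma sum_indicator_of_mem_blueStep {n k₀ : ℕ} (hk₀ : k₀ ≤ P.m) {ω : Ω}
    (hω : ω ∈ P.blueStep n k₀) (u v : ℕ → Ω → ℝ) :
    ∑ k ∈ Finset.range (P.m + 1),
      ((P.redStep n k).indicator (u k) ω + (P.blueStep n k).indicator (v k) ω) = v k₀ ω := by
  have hred : ∀ k, ω ∉ P.redStep n k := fun k h => by have := hω.1; have := h.1; omega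
  rw [Finset.sum_eq_single_of_mem k₀ (Finset.mem_range_succ_iff.mpr hk₀)]
  · simp [hω, hred]
  · intro k _ hk
    have hblue : ω ∉ P.blueStep n k := fun h => hk (by have := hω.2; have := h.2; omega)
    simp [hred, hblue]

lemma condExp_sum_indicator_steps (n : ℕ) {u v : ℕ → Ω → ℝ}
    (hu : ∀ k, StronglyMeasurable[P.F n] (u k)) (hv : ∀ k, StronglyMeasurable[P.F n] (v k))
    {C : ℝ} (huC : ∀ k ≤ P.m, ∀ᵐ ω ∂P.μ, |u k ω| ≤ C)
    (hvC : ∀ k ≤ P.m, ∀ᵐ ω ∂P.μ, |v k ω| ≤ C) :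
    P.μ[∑ k ∈ Finset.range (P.m + 1),
        ((P.redStep n k).indicator (u k) + (P.blueStep n k).indicator (v k)) | P.F n]
      =ᵐ[P.μ] fun ω => ∑ k ∈ Finset.range (P.m + 1),
        (P.m.choose k : ℝ) * P.x n ω ^ k * (1 - P.x n ω) ^ (P.m - k)
          * (P.p k * u k ω + (1 - P.p k) * v k ω) := by
  have hint : ∀ {s : Set Ω} {w : Ω → ℝ}, MeasurableSet s → StronglyMeasurable[P.F n] w →
      (∀ᵐ ω ∂P.μ, |w ω| ≤ C) → Integrable (s.indicator w) P.μ := fun hs hw hwC =>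
    (Integrable.of_bound (hw.mono (P.F.le n)).aestronglyMeasurable C
      (by simpa only [Real.norm_eq_abs] using hwC)).indicator hs
  have hred := fun k hk => hint (P.measurableSet_redStep n k) (hu k) (huC k hk)
  have hblue := fun k hk => hint (P.measurableSet_blueStep n k) (hv k) (hvC k hk)
  refine (condExp_finsetSum (fun k hk =>
    (hred k (Finset.mem_range_succ_iff.mp hk)).add (hblue k (Finset.mem_range_succ_iff.mp hk)))
    _).trans ?_
  refine (eventuallyEq_sum fun k hk => ?_).trans (.of_forall fun ω => Finset.sum_apply ω _ _)
  have hk' : k ≤ P.m := Finset.mem_range_succ_iff.mp hk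
  refine (condExp_add (hred k hk') (hblue k hk') _).trans ?_
  filter_upwards [condExp_indicator_eq_mul_of_bound (P.F.le n) (P.measurableSet_redStep n k)
      (hu k) (huC k hk'), condExp_indicator_eq_mul_of_bound (P.F.le n)
      (P.measurableSet_blueStep n k) (hv k) (hvC k hk'), P.condExp_indicator_redStep (n := n) hk',
      P.condExp_indicator_blueStep (n := n) hk'] with ω h₁ h₂ h₃ h₄
  simp only [Pi.add_apply, h₁, h₂, Pi.mul_apply, h₃, h₄]
  ring

lemma sum_indicator_one_steps_of_not_exists {n : ℕ} {ω : Ω}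
    (h : ¬∃ k ≤ P.m, ω ∈ P.redStep n k ∨ ω ∈ P.blueStep n k) :
    ∑ k ∈ Finset.range (P.m + 1), ((P.redStep n k).indicator (fun _ => (1 : ℝ)) ω
      + (P.blueStep n k).indicator (fun _ => (1 : ℝ)) ω) = 0 := by
  simp only [not_exists, not_and, not_or] at h
  refine Finset.sum_eq_zero fun k hk => ?_
  obtain ⟨hred, hblue⟩ := h k (Finset.mem_range_succ_iff.mp hk)
  simp [hred, hblue]

/-- Almost surely one of the `2 (m + 1)` transitions of the model occurs: their conditional
probabilities add up to `1`. -/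
lemma ae_exists_step (n : ℕ) :
    ∀ᵐ ω ∂P.μ, ∃ k ≤ P.m, ω ∈ P.redStep n k ∨ ω ∈ P.blueStep n k := by
  set h : Ω → ℝ := ∑ k ∈ Finset.range (P.m + 1),
    ((P.redStep n k).indicator (fun _ => 1) + (P.blueStep n k).indicator (fun _ => 1))
  have hh : ∀ ω, (∃ k ≤ P.m, ω ∈ P.redStep n k ∨ ω ∈ P.blueStep n k) → h ω = 1 := by
    rintro ω ⟨k, hk, hred | hblue⟩ <;> simp only [h, Finset.sum_apply, Pi.add_apply]
    · exact P.sum_indicator_of_mem_redStep hk hred (fun _ _ => 1) (fun _ _ => 1)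
    · exact P.sum_indicator_of_mem_blueStep hk hblue (fun _ _ => 1) (fun _ _ => 1)
  have hh' : ∀ ω, (¬∃ k ≤ P.m, ω ∈ P.redStep n k ∨ ω ∈ P.blueStep n k) → h ω = 0 := by
    intro ω hω
    simpa only [h, Finset.sum_apply, Pi.add_apply] using P.sum_indicator_one_steps_of_not_exists hω
  have hint : Integrable h P.μ := integrable_finsetSum' _ fun k _ =>
    ((integrable_const 1).indicator (P.measurableSet_redStep n k)).add
      ((integrable_const 1).indicator (P.measurableSet_blueStep n k))
  have hone : ∫ ω, h ω ∂P.μ = 1 := by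
    rw [← integral_condExp (P.F.le n), integral_congr_ae (P.condExp_sum_indicator_steps n
      (fun _ => stronglyMeasurable_const) (fun _ => stronglyMeasurable_const) (C := 1)
      (fun _ _ => by simp) (fun _ _ => by simp))]
    simp [sum_bernstein_eq_one]
  have hzero : (fun ω => 1 - h ω) =ᵐ[P.μ] 0 := by
    refine (integral_eq_zero_iff_of_nonneg (fun ω => ?_) ((integrable_const 1).sub hint)).mp ?_
    · by_cases hω : ∃ k ≤ P.m, ω ∈ P.redStep n k ∨ ω ∈ P.blueStep n k
      · simp [hh ω hω]
      · simp [hh' ω hω]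
    · rw [Pi.sub_def, integral_sub (integrable_const 1) hint, hone]; simp
  filter_upwards [hzero] with ω hω
  by_contra hne
  simp [hh' ω hne] at hω

lemma condExp_of_eq_on_steps (n : ℕ) {Y : Ω → ℝ} {u v : ℕ → Ω → ℝ}
    (hu : ∀ k, StronglyMeasurable[P.F n] (u k)) (hv : ∀ k, StronglyMeasurable[P.F n] (v k))
    {C : ℝ} (huC : ∀ k ≤ P.m, ∀ᵐ ω ∂P.μ, |u k ω| ≤ C)
    (hvC : ∀ k ≤ P.m, ∀ᵐ ω ∂P.μ, |v k ω| ≤ C)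
    (hred : ∀ k ω, ω ∈ P.redStep n k → Y ω = u k ω)
    (hblue : ∀ k ω, ω ∈ P.blueStep n k → Y ω = v k ω) :
    P.μ[Y | P.F n] =ᵐ[P.μ] fun ω => ∑ k ∈ Finset.range (P.m + 1),
      (P.m.choose k : ℝ) * P.x n ω ^ k * (1 - P.x n ω) ^ (P.m - k)
        * (P.p k * u k ω + (1 - P.p k) * v k ω) := by
  refine (condExp_congr_ae ?_).trans (P.condExp_sum_indicator_steps n hu hv huC hvC)
  filter_upwards [P.ae_exists_step n] with ω ⟨k, hk, hstep⟩
  simp only [Finset.sum_apply, Pi.add_apply]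
  rcases hstep with h | h
  · rw [P.sum_indicator_of_mem_redStep hk h, hred k ω h]
  · rw [P.sum_indicator_of_mem_blueStep hk h, hblue k ω h]

lemma A_le (n : ℕ) : ∀ᵐ ω ∂P.μ, P.A n ω ≤ P.A0 + n := by
  induction n with
  | zero => exact .of_forall fun ω => by simp [P.hA0]
  | succ n ih =>
    filter_upwards [ih, P.ae_exists_step n] with ω h ⟨k, _, hstep⟩
    rcases hstep with hstep | hstep <;> have := hstep.1 <;> omega

lemma condExp_X_succ (n : ℕ) :
    P.μ[fun ω => (P.X (n + 1) ω : ℝ) | P.F n] =ᵐ[P.μ]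
      fun ω => P.X n ω + 2 * P.m * P.x n ω + 2 * P.m * polyP P.m P.p (P.x n ω) := by
  have hX : StronglyMeasurable[P.F n] fun ω => (P.X n ω : ℝ) :=
    (measurable_from_top.comp (P.adaptedX n)).stronglyMeasurable
  refine (P.condExp_of_eq_on_steps n (u := fun k ω => P.X n ω + k + P.m)
    (v := fun k ω => P.X n ω + k) (fun k => (hX.add_const _).add_const _)
    (fun k => hX.add_const _) (C := P.S n + 2 * P.m) (fun k hk => .of_forall fun ω => ?_)
    (fun k hk => .of_forall fun ω => ?_) (fun k ω h => by rw [h.2]; push_cast; ring)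
    (fun k ω h => by rw [h.2]; push_cast; ring)).trans (.of_forall fun ω => ?_)
  · have : (P.X n ω : ℝ) ≤ P.S n := by exact_mod_cast P.hXle n ω
    have : (k : ℝ) ≤ P.m := by exact_mod_cast hk
    rw [abs_of_nonneg (by positivity)]; linarith
  · have : (P.X n ω : ℝ) ≤ P.S n := by exact_mod_cast P.hXle n ω
    have : (k : ℝ) ≤ P.m := by exact_mod_cast hk
    rw [abs_of_nonneg (by positivity)]; linarith
  · have hsplit : ∀ k ∈ Finset.range (P.m + 1),
        (P.m.choose k : ℝ) * P.x n ω ^ k * (1 - P.x n ω) ^ (P.m - k)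
          * (P.p k * (P.X n ω + k + P.m) + (1 - P.p k) * (P.X n ω + k))
        = P.X n ω * ((P.m.choose k : ℝ) * P.x n ω ^ k * (1 - P.x n ω) ^ (P.m - k))
          + k * ((P.m.choose k : ℝ) * P.x n ω ^ k * (1 - P.x n ω) ^ (P.m - k))
          + P.m * ((P.m.choose k : ℝ) * P.x n ω ^ k * (1 - P.x n ω) ^ (P.m - k) * P.p k) :=
      fun k _ => by ring
    simp only
    rw [Finset.sum_congr rfl hsplit, Finset.sum_add_distrib, Finset.sum_add_distrib,
      ← Finset.mul_sum, ← Finset.mul_sum, sum_bernstein_eq_one, sum_natCast_mul_bernstein,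
      sum_bernstein_mul_eq_add_two_mul_polyP P.hm]
    ring

lemma condExp_A_succ (n : ℕ) :
    P.μ[fun ω => (P.A (n + 1) ω : ℝ) | P.F n] =ᵐ[P.μ]
      fun ω => P.A n ω + P.x n ω + 2 * polyP P.m P.p (P.x n ω) := by
  have hA : StronglyMeasurable[P.F n] fun ω => (P.A n ω : ℝ) :=
    (measurable_from_top.comp (P.adaptedA n)).stronglyMeasurable
  have hbound : ∀ᵐ ω ∂P.μ, |(P.A n ω : ℝ)| ≤ P.A0 + n := by
    filter_upwards [P.A_le n] with ω h
    rw [abs_of_nonneg (Nat.cast_nonneg _)]; exact_mod_cast h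
  refine (P.condExp_of_eq_on_steps n (u := fun k ω => P.A n ω + 1)
    (v := fun k ω => P.A n ω) (fun k => hA.add_const _) (fun k => hA) (C := P.A0 + n + 1)
    (fun k hk => hbound.mono fun ω h => ?_) (fun k hk => hbound.mono fun ω h => by linarith)
    (fun k ω h => by rw [h.1]; push_cast; ring) (fun k ω h => by rw [h.1]))
    |>.trans (.of_forall fun ω => ?_)
  · rw [abs_of_nonneg (by positivity)]; rw [abs_of_nonneg (by positivity)] at h; linarith
  · have hsplit : ∀ k ∈ Finset.range (P.m + 1),
        (P.m.choose k : ℝ) * P.x n ω ^ k * (1 - P.x n ω) ^ (P.m - k)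
          * (P.p k * (P.A n ω + 1) + (1 - P.p k) * P.A n ω)
        = P.A n ω * ((P.m.choose k : ℝ) * P.x n ω ^ k * (1 - P.x n ω) ^ (P.m - k))
          + (P.m.choose k : ℝ) * P.x n ω ^ k * (1 - P.x n ω) ^ (P.m - k) * P.p k :=
      fun k _ => by ring
    simp only
    rw [Finset.sum_congr rfl hsplit, Finset.sum_add_distrib, ← Finset.mul_sum,
      sum_bernstein_eq_one, sum_bernstein_mul_eq_add_two_mul_polyP P.hm]
    ring

lemma stronglyAdapted_x : StronglyAdapted P.F P.x := fun n =>
  ((measurable_from_top.comp (P.adaptedX n)).div_const _).stronglyMeasurable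

lemma stronglyAdapted_a : StronglyAdapted P.F P.a := fun n =>
  ((measurable_from_top.comp (P.adaptedA n)).div_const _).stronglyMeasurable

lemma a_mem_Icc (n : ℕ) : ∀ᵐ ω ∂P.μ, P.a n ω ∈ Set.Icc (0 : ℝ) 1 := by
  filter_upwards [P.A_le n] with ω h
  exact ⟨by unfold a; positivity, div_le_one_of_le₀ (by
    have : (P.A n ω : ℝ) ≤ P.A0 + n := by exact_mod_cast h
    linarith [Nat.cast_nonneg (α := ℝ) P.B0]) (by positivity)⟩

lemma mul_a (n : ℕ) : ∀ᵐ ω ∂P.μ, ((P.A0 : ℝ) + P.B0 + n) * P.a n ω = P.A n ω := by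
  filter_upwards [P.A_le n] with ω h
  refine mul_div_cancel_of_imp' fun h0 => le_antisymm ?_ (Nat.cast_nonneg _)
  have : (P.A n ω : ℝ) ≤ P.A0 + n := by exact_mod_cast h
  linarith [Nat.cast_nonneg (α := ℝ) P.B0]

lemma integrable_x (n : ℕ) : Integrable (P.x n) P.μ :=
  integrable_of_ae_mem_Icc ((P.stronglyAdapted_x n).mono (P.F.le n)).aestronglyMeasurable
    (.of_forall (P.x_mem_Icc n))

lemma integrable_a (n : ℕ) : Integrable (P.a n) P.μ :=
  integrable_of_ae_mem_Icc ((P.stronglyAdapted_a n).mono (P.F.le n)).aestronglyMeasurable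
    (P.a_mem_Icc n)

lemma condExp_x_succ_sub (n : ℕ) :
    P.μ[P.x (n + 1) - P.x n | P.F n] =ᵐ[P.μ]
      fun ω => 2 * P.m / P.S (n + 1) * polyP P.m P.p (P.x n ω) := by
  have hx : P.x (n + 1) = (P.S (n + 1) : ℝ)⁻¹ • fun ω => (P.X (n + 1) ω : ℝ) := by
    ext ω; simp [x, div_eq_inv_mul]
  filter_upwards [condExp_sub (P.integrable_x (n + 1)) (P.integrable_x n) (P.F n),
    condExp_smul (μ := P.μ) (P.S (n + 1) : ℝ)⁻¹ (fun ω => (P.X (n + 1) ω : ℝ)) (P.F n),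
    P.condExp_X_succ n] with ω h₁ h₂ h₃
  rw [h₁, Pi.sub_apply, condExp_of_stronglyMeasurable (P.F.le n) (P.stronglyAdapted_x n)
    (P.integrable_x n), hx, h₂, Pi.smul_apply, smul_eq_mul, h₃, ← P.S_mul_x n ω,
    P.cast_S_succ]
  have : (0 : ℝ) < P.S n + 2 * P.m := by have := P.hm; positivity
  field_simp
  ring

lemma condExp_a_succ_sub (n : ℕ) :
    P.μ[P.a (n + 1) - P.a n | P.F n] =ᵐ[P.μ] fun ω => 1 / ((P.A0 : ℝ) + P.B0 + (n + 1))
      * (P.x n ω + 2 * polyP P.m P.p (P.x n ω) - P.a n ω) := by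
  have ha : P.a (n + 1) = ((P.A0 : ℝ) + P.B0 + (n + 1))⁻¹ • fun ω => (P.A (n + 1) ω : ℝ) := by
    ext ω; simp [a, div_eq_inv_mul]
  filter_upwards [condExp_sub (P.integrable_a (n + 1)) (P.integrable_a n) (P.F n),
    condExp_smul (μ := P.μ) ((P.A0 : ℝ) + P.B0 + (n + 1))⁻¹ (fun ω => (P.A (n + 1) ω : ℝ))
      (P.F n), P.condExp_A_succ n, P.mul_a n] with ω h₁ h₂ h₃ h₄
  rw [h₁, Pi.sub_apply, condExp_of_stronglyMeasurable (P.F.le n) (P.stronglyAdapted_a n)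
    (P.integrable_a n), ha, h₂, Pi.smul_apply, smul_eq_mul, h₃, ← h₄]
  field_simp
  ring

lemma abs_x_succ_sub_le (n : ℕ) :
    ∀ᵐ ω ∂P.μ, |P.x (n + 1) ω - P.x n ω| ≤ 1 / ((n : ℝ) + 1) := by
  filter_upwards [P.ae_exists_step n] with ω ⟨k, hk, hstep⟩
  obtain ⟨j, hj, hX⟩ : ∃ j ≤ 2 * P.m, P.X (n + 1) ω = P.X n ω + j := by
    rcases hstep with h | h
    · exact ⟨k + P.m, by omega, by rw [h.2]; ring⟩
    · exact ⟨k, by omega, h.2⟩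
  have hm : (0 : ℝ) < 2 * P.m := by have := P.hm; positivity
  calc |P.x (n + 1) ω - P.x n ω|
      = |((P.X n ω : ℝ) + j) / ((P.S n : ℝ) + 2 * P.m) - (P.X n ω : ℝ) / P.S n| := by
        simp only [x, hX, Nat.cast_add, cast_S_succ]
    _ ≤ 2 * P.m / ((P.S n : ℝ) + 2 * P.m) :=
        abs_add_div_add_sub_div_le (Nat.cast_nonneg _) (by exact_mod_cast P.hXle n ω)
          (Nat.cast_nonneg _) (by exact_mod_cast hj) hm
    _ ≤ 1 / ((n : ℝ) + 1) := by
        rw [div_le_div_iff₀ (by positivity) (by positivity), cast_S]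
        nlinarith [Nat.cast_nonneg (α := ℝ) P.X0, Nat.cast_nonneg (α := ℝ) P.Y0]

lemma abs_a_succ_sub_le (n : ℕ) :
    ∀ᵐ ω ∂P.μ, |P.a (n + 1) ω - P.a n ω| ≤ 1 / ((n : ℝ) + 1) := by
  filter_upwards [P.ae_exists_step n, P.A_le n] with ω ⟨k, _, hstep⟩ hA
  obtain ⟨i, hi, hAi⟩ : ∃ i ≤ 1, P.A (n + 1) ω = P.A n ω + i := by
    rcases hstep with h | h
    · exact ⟨1, le_rfl, h.1⟩
    · exact ⟨0, zero_le_one, h.1⟩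
  have hT : (0 : ℝ) ≤ P.A0 + P.B0 := by positivity
  calc |P.a (n + 1) ω - P.a n ω|
      = |((P.A n ω : ℝ) + i) / (((P.A0 : ℝ) + P.B0 + n) + 1)
          - (P.A n ω : ℝ) / ((P.A0 : ℝ) + P.B0 + n)| := by
        simp only [a, hAi, Nat.cast_add, Nat.cast_one, add_assoc]
    _ ≤ 1 / (((P.A0 : ℝ) + P.B0 + n) + 1) :=
        abs_add_div_add_sub_div_le (Nat.cast_nonneg _)
          (by have : (P.A n ω : ℝ) ≤ P.A0 + n := by exact_mod_cast hA
              linarith [Nat.cast_nonneg (α := ℝ) P.B0])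
          (Nat.cast_nonneg _) (by exact_mod_cast hi) one_pos
    _ ≤ 1 / ((n : ℝ) + 1) := one_div_le_one_div_of_le (by positivity) (by linarith)

lemma ae_forall_x_succ_eq : ∀ᵐ ω ∂P.μ, ∀ n, P.x (n + 1) ω = P.x n ω
    + (martingalePart P.x P.F P.μ (n + 1) ω - martingalePart P.x P.F P.μ n ω)
    + 2 * P.m / P.S (n + 1) * polyP P.m P.p (P.x n ω) := by
  filter_upwards [ae_all_iff.mpr P.condExp_x_succ_sub] with ω h n
  rw [martingalePart_add_one_sub_apply, h n]
  ring

lemma ae_forall_a_succ_eq : ∀ᵐ ω ∂P.μ, ∀ n, P.a (n + 1) ω = P.a n ω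
    + (martingalePart P.a P.F P.μ (n + 1) ω - martingalePart P.a P.F P.μ n ω)
    + 1 / ((P.A0 : ℝ) + P.B0 + (n + 1))
      * (P.x n ω + 2 * polyP P.m P.p (P.x n ω) - P.a n ω) := by
  filter_upwards [ae_all_iff.mpr P.condExp_a_succ_sub] with ω h n
  rw [martingalePart_add_one_sub_apply, h n]
  ring

lemma ae_exists_tendsto_martingalePart_x :
    ∀ᵐ ω ∂P.μ, ∃ l, Tendsto (fun n => martingalePart P.x P.F P.μ n ω) atTop (𝓝 l) :=
  ae_exists_tendsto_martingalePart P.stronglyAdapted_x P.integrable_x (K := 1)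
    (.of_forall fun ω => abs_le.mpr ⟨by linarith [(P.x_mem_Icc 0 ω).1], (P.x_mem_Icc 0 ω).2⟩)
    P.abs_x_succ_sub_le summable_one_div_nat_succ_sq

lemma ae_exists_tendsto_martingalePart_a :
    ∀ᵐ ω ∂P.μ, ∃ l, Tendsto (fun n => martingalePart P.a P.F P.μ n ω) atTop (𝓝 l) :=
  ae_exists_tendsto_martingalePart P.stronglyAdapted_a P.integrable_a (K := 1)
    ((P.a_mem_Icc 0).mono fun ω h => abs_le.mpr ⟨by linarith [h.1], h.2⟩)
    P.abs_a_succ_sub_le summable_one_div_nat_succ_sq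

theorem ae_exists_tendsto_x (hP : ∃ z, polyP P.m P.p z ≠ 0) :
    ∀ᵐ ω ∂P.μ, ∃ z ∈ P.Zp, Tendsto (fun n => P.x n ω) atTop (𝓝 z) := by
  have hc : ∀ n, 0 ≤ 2 * (P.m : ℝ) / P.S (n + 1) := fun n => by positivity
  have hcsum : Tendsto (fun N => ∑ n ∈ Finset.range N, 2 * (P.m : ℝ) / P.S (n + 1))
      atTop atTop := by
    refine (tendsto_sum_div_add_mul_succ_atTop (s := P.X0 + P.Y0) (d := 2 * P.m) (by positivity)
      (by have := P.hm; positivity)).congr fun N => Finset.sum_congr rfl fun n _ => ?_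
    rw [cast_S]; push_cast; ring_nf
  have hstep : ∀ᵐ ω ∂P.μ, Tendsto (fun n => P.x (n + 1) ω - P.x n ω) atTop (𝓝 0) := by
    filter_upwards [ae_all_iff.mpr P.abs_x_succ_sub_le] with ω h
    exact squeeze_zero_norm h tendsto_one_div_add_atTop_nhds_zero_nat
  filter_upwards [P.ae_forall_x_succ_eq, P.ae_exists_tendsto_martingalePart_x, hstep]
    with ω hrec ⟨l, hl⟩ hst
  obtain ⟨z, hz⟩ := exists_tendsto_of_rec (continuous_polyP _ _)
    (finite_setOf_polyP_eq_zero hP) hc hrec hst hl.cauchySeq (P.x_mem_Icc · ω)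
  exact ⟨z, ⟨isClosed_Icc.mem_of_tendsto hz (.of_forall (P.x_mem_Icc · ω)),
    eq_zero_of_tendsto_of_rec (continuous_polyP _ _) hc hcsum hrec hz hl⟩, hz⟩

theorem ae_exists_tendsto_a (hP : ∃ z, polyP P.m P.p z ≠ 0) :
    ∀ᵐ ω ∂P.μ, ∃ z ∈ P.Zp, Tendsto (fun n => P.a n ω) atTop (𝓝 z) := by
  have hc0 : ∀ n : ℕ, 0 ≤ 1 / ((P.A0 : ℝ) + P.B0 + (n + 1)) := fun n => by positivity
  have hc1 : ∀ n : ℕ, 1 / ((P.A0 : ℝ) + P.B0 + (n + 1)) ≤ 1 := fun n => by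
    rw [div_le_one (by positivity)]
    linarith [(by positivity : (0 : ℝ) ≤ P.A0 + P.B0 + n)]
  have hcsum : Tendsto (fun N => ∑ n ∈ Finset.range N, 1 / ((P.A0 : ℝ) + P.B0 + (n + 1)))
      atTop atTop := by
    simpa using tendsto_sum_div_add_mul_succ_atTop (s := P.A0 + P.B0) (d := 1) (by positivity)
      one_pos
  filter_upwards [P.ae_exists_tendsto_x hP, P.ae_forall_a_succ_eq,
    P.ae_exists_tendsto_martingalePart_a] with ω ⟨z, hz, hxz⟩ hrec ⟨l, hl⟩
  have hq : Tendsto (fun n => P.x n ω + 2 * polyP P.m P.p (P.x n ω)) atTop (𝓝 z) := by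
    simpa [hz.2] using hxz.add ((continuous_polyP P.m P.p).tendsto z |>.comp hxz |>.const_mul 2)
  exact ⟨z, hz, tendsto_of_rec_linear hc0 hc1 hcsum hq hl hrec⟩

end PAProcess

theorem nonlinear_model_coexistence_general
    {Ω : Type} [MeasurableSpace Ω] (P : PAProcess Ω)
    (hp0 : 0 < P.p 0) (hpm : P.p P.m < 1) :
    P.poly 0 = P.p 0 / 2 ∧ 0 < P.poly 0 ∧
    P.poly 1 = (P.p P.m - 1) / 2 ∧ P.poly 1 < 0 ∧
    P.Zp ⊆ Set.Ioo (0 : ℝ) 1 ∧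
    ∃ L : Ω → ℝ,
      (∀ᵐ ω ∂P.μ, Tendsto (fun n => P.a n ω) atTop (nhds (L ω))) ∧
      (∀ᵐ ω ∂P.μ, L ω ∈ Set.Ioo (0 : ℝ) 1) := by
  have hP0 : P.poly 0 = P.p 0 / 2 := polyP_zero P.hm P.p
  have hP1 : P.poly 1 = (P.p P.m - 1) / 2 := polyP_one P.hm P.p
  have hP0pos : 0 < P.poly 0 := by rw [hP0]; linarith
  have hP1neg : P.poly 1 < 0 := by rw [hP1]; linarith
  have hZ : P.Zp ⊆ Set.Ioo 0 1 := zeroSetP_subset_Ioo hP0pos.ne' hP1neg.ne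
  have hconv := P.ae_exists_tendsto_a ⟨0, hP0pos.ne'⟩
  refine ⟨hP0, hP0pos, hP1, hP1neg, hZ, fun ω => limUnder atTop (P.a · ω), ?_, ?_⟩
  · filter_upwards [hconv] with ω ⟨z, _, hz⟩
    exact tendsto_nhds_limUnder ⟨z, hz⟩
  · filter_upwards [hconv] with ω ⟨z, hzZ, hz⟩
    rw [hz.limUnder_eq]
    exact hZ hzZ

/-- **Coexistence.** In a nonlinear model with `X_0, Y_0 > 0`, if `p_0 > 0` and `p_m < 1`,
then `P(0) = p_0/2 > 0` and `P(1) = (p_m − 1)/2 < 0`, so every point of `Z_P` lies in the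
open interval `(0,1)`; consequently `a_n` converges almost surely to a limit lying in
`(0,1)`, i.e. the two types coexist in the limit. -/
theorem nonlinear_model_coexistence
    {Ω : Type} [MeasurableSpace Ω] (P : PAProcess Ω)
    (hnonlin : ∃ k ≤ P.m, P.p k ≠ (k : ℝ) / P.m)
    (hX0 : 0 < P.X0) (hY0 : 0 < P.Y0)
    (hp0 : 0 < P.p 0) (hpm : P.p P.m < 1) :
    P.poly 0 = P.p 0 / 2 ∧ 0 < P.poly 0 ∧
    P.poly 1 = (P.p P.m - 1) / 2 ∧ P.poly 1 < 0 ∧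
    P.Zp ⊆ Set.Ioo (0 : ℝ) 1 ∧
    ∃ L : Ω → ℝ,
      (∀ᵐ ω ∂P.μ, Tendsto (fun n => P.a n ω) atTop (nhds (L ω))) ∧
      (∀ᵐ ω ∂P.μ, L ω ∈ Set.Ioo (0 : ℝ) 1) :=
  nonlinear_model_coexistence_general P hp0 hpm
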